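/- Let A be a Krull-Schmidt additive category and B ⊆ A a full additive subcategory closed under retracts and direct sums. The quotient functor A → A/B induces a bijection between isomorphism classes of indecomposable objects of A not belonging to B and isomorphism classes of indecomposable objects of A/B. -/

import Mathlib

open CategoryTheory CategoryTheory.Limits ZeroObject

namespace Stmt6

variable {A : Type*} [Category A] [Preadditive A] [HasZeroObject A]
  [HasBinaryBiproducts A] [HasFiniteBiproducts A]

/-- A morphism factors through an object belonging to the class `B`. -/
def FactorsThru (B : Set A) {x y : A} (f : x ⟶ y) : Prop :=
  ∃ (b : A) (g : x ⟶ b) (h : b ⟶ y), b ∈ B ∧ g ≫ h = f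

theorem factorsThru_add {B : Set A}
    (hB : ∀ {b b' : A}, b ∈ B → b' ∈ B → (b ⊞ b') ∈ B)
    {x y : A} {f g : x ⟶ y} (hf : FactorsThru B f) (hg : FactorsThru B g) :
    FactorsThru B (f + g) := by
  obtain ⟨b, p, q, hb, hpq⟩ := hf
  obtain ⟨b', p', q', hb', hpq'⟩ := hg
  exact ⟨b ⊞ b', biprod.lift p p', biprod.desc q q', hB hb hb', by
    rw [biprod.lift_desc, hpq, hpq']⟩

/-- A (nonempty) full additive subcategory of `A`, given by its class of objects,
closed under finite direct sums. -/
structure AdditiveSubcat (A : Type*) [Category A] [Preadditive A]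
    [HasBinaryBiproducts A] where
  carrier : Set A
  nonempty : carrier.Nonempty
  biprod_mem : ∀ {b b' : A}, b ∈ carrier → b' ∈ carrier → (b ⊞ b') ∈ carrier

variable (S : AdditiveSubcat A)

/-- The hom relation defining the additive quotient `A/B`: two morphisms are
identified when their difference factors through an object of `B`. -/
def AdditiveSubcat.rel (S : AdditiveSubcat A) : HomRel A :=
  fun _ _ f g => FactorsThru S.carrier (f - g)

instance : Congruence S.rel where
  equivalence := by
    refine ⟨fun f => ?_, fun {f g} h => ?_, fun {f g h} h1 h2 => ?_⟩
    · obtain ⟨b, hb⟩ := S.nonempty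
      exact ⟨b, 0, 0, hb, by simp⟩
    · obtain ⟨b, p, q, hb, hpq⟩ := h
      exact ⟨b, -p, q, hb, by rw [Preadditive.neg_comp, hpq, neg_sub]⟩
    · have := factorsThru_add S.biprod_mem h1 h2
      rwa [sub_add_sub_cancel] at this
  comp_left := by
    rintro X Y Z f g g' ⟨b, p, q, hb, hpq⟩
    exact ⟨b, f ≫ p, q, hb, by rw [Category.assoc, hpq, Preadditive.comp_sub]⟩
  comp_right := by
    rintro X Y Z f f' g ⟨b, p, q, hb, hpq⟩
    exact ⟨b, p, q ≫ g, hb, by rw [← Category.assoc, hpq, Preadditive.sub_comp]⟩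

/-- The additive quotient category `A/B` is preadditive. -/
instance : Preadditive (CategoryTheory.Quotient S.rel) :=
  CategoryTheory.Quotient.preadditive S.rel (by
    intro X Y f₁ f₂ g₁ g₂ h1 h2
    have := factorsThru_add S.biprod_mem h1 h2
    rwa [show (f₁ - f₂) + (g₁ - g₂) = (f₁ + g₁) - (f₂ + g₂) by abel] at this)

/-- An additive category is Krull-Schmidt if every object is a finite direct sum of
objects with local endomorphism rings. -/
def KrullSchmidt (A : Type*) [Category A] [Preadditive A] [HasFiniteBiproducts A] : Prop :=
  ∀ x : A, ∃ (n : ℕ) (f : Fin n → A),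
    (∀ i, IsLocalRing (End (f i))) ∧ Nonempty (x ≅ ⨁ f)


/-- An object is indecomposable: nonzero and admitting no nontrivial direct sum
decomposition. -/
def Indec (x : A) : Prop :=
  ¬ IsZero x ∧ ∀ y z : A, Nonempty (x ≅ y ⊞ z) → IsZero y ∨ IsZero z

/-- An object of the additive quotient `A/B` is indecomposable: nonzero and admitting
no nontrivial direct sum decomposition (direct sums in the quotient being the images of
the direct sums of `A` under the quotient functor, which is additive, full and
essentially surjective). -/
def IndecQ (S : AdditiveSubcat A) (q : CategoryTheory.Quotient S.rel) : Prop :=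
  ¬ IsZero q ∧ ∀ y z : A,
    Nonempty (q ≅ (CategoryTheory.Quotient.functor S.rel).obj (y ⊞ z)) →
      IsZero ((CategoryTheory.Quotient.functor S.rel).obj y) ∨
        IsZero ((CategoryTheory.Quotient.functor S.rel).obj z)

section Aux

/-! ### Ring-theoretic auxiliary lemmas (noncommutative local rings) -/

lemma aux_isUnit_or_isUnit_one_sub {R : Type*} [Ring R] [IsLocalRing R] (a : R) :
    IsUnit a ∨ IsUnit (1 - a) :=
  IsLocalRing.isUnit_or_isUnit_of_add_one (a := a) (b := 1 - a) (by abel)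

lemma aux_isLocalRing_of_isUnit_or {R : Type*} [Ring R] [Nontrivial R]
    (h : ∀ a : R, IsUnit a ∨ IsUnit (1 - a)) : IsLocalRing R :=
  ⟨fun {a b} hab => by
    have := h a
    rwa [show (1 : R) - a = b by rw [← hab]; abel] at this⟩

lemma aux_idem_eq_zero_or_one {R : Type*} [Ring R] [IsLocalRing R] {e : R}
    (he : e * e = e) : e = 0 ∨ e = 1 := by
  rcases aux_isUnit_or_isUnit_one_sub e with h | h
  · obtain ⟨u, hu⟩ := h
    right
    calc e = 1 * e := (one_mul e).symm
    _ = (↑u⁻¹ * ↑u) * e := by rw [u.inv_mul]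
    _ = ↑u⁻¹ * (e * e) := by rw [hu, mul_assoc]
    _ = ↑u⁻¹ * ↑u := by rw [he, hu]
    _ = 1 := u.inv_mul
  · obtain ⟨u, hu⟩ := h
    have h2 : (1 - e) * (1 - e) = 1 - e := by
      rw [mul_sub, sub_mul, sub_mul, he]
      simp only [mul_one, one_mul]
      abel
    left
    have : (1 : R) - e = 1 := by
      calc (1 : R) - e = 1 * (1 - e) := (one_mul _).symm
      _ = (↑u⁻¹ * ↑u) * (1 - e) := by rw [u.inv_mul]
      _ = ↑u⁻¹ * ((1 - e) * (1 - e)) := by rw [hu, mul_assoc]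
      _ = ↑u⁻¹ * ↑u := by rw [h2, hu]
      _ = 1 := u.inv_mul
    have := sub_eq_iff_eq_add.mp this
    simpa using this.symm

/-- Conjugation of endomorphisms by an isomorphism. -/
def auxConj {C : Type*} [Category C] {x y : C} (φ : x ≅ y) (b : End x) : End y :=
  φ.inv ≫ b ≫ φ.hom

lemma aux_isUnit_conj {C : Type*} [Category C] {x y : C} (φ : x ≅ y) {b : End x}
    (hb : IsUnit b) : IsUnit (auxConj φ b) := by
  obtain ⟨u, hu⟩ := hb
  refine ⟨⟨auxConj φ b, auxConj φ (↑u⁻¹ : End x), ?_, ?_⟩, rfl⟩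
  · show auxConj φ (↑u⁻¹ : End x) ≫ auxConj φ b = 𝟙 y
    have h1 : (↑u⁻¹ : End x) ≫ b = 𝟙 x := by
      have := u.mul_inv
      rw [End.mul_def] at this
      simpa [hu] using this
    show (φ.inv ≫ (↑u⁻¹ : End x) ≫ φ.hom) ≫ (φ.inv ≫ b ≫ φ.hom) = 𝟙 y
    simp only [Category.assoc, Iso.hom_inv_id_assoc]
    rw [← Category.assoc (↑u⁻¹ : End x) b, h1]
    simp
  · show auxConj φ b ≫ auxConj φ (↑u⁻¹ : End x) = 𝟙 y
    have h1 : b ≫ (↑u⁻¹ : End x) = 𝟙 x := by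
      have := u.inv_mul
      rw [End.mul_def] at this
      simpa [hu] using this
    show (φ.inv ≫ b ≫ φ.hom) ≫ (φ.inv ≫ (↑u⁻¹ : End x) ≫ φ.hom) = 𝟙 y
    simp only [Category.assoc, Iso.hom_inv_id_assoc]
    rw [← Category.assoc b (↑u⁻¹ : End x), h1]
    simp

/-- Transport of local endomorphism rings along an isomorphism. -/
lemma aux_isLocalRing_end_of_iso {C : Type*} [Category C] [Preadditive C] {x y : C}
    (φ : x ≅ y) (h : IsLocalRing (End x)) : IsLocalRing (End y) := by
  have hnt : (𝟙 y : End y) ≠ 0 := by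
    intro h0
    have : (𝟙 x : End x) = 0 := by
      have : 𝟙 x = φ.hom ≫ 𝟙 y ≫ φ.inv := by simp
      rw [this, h0]; simp
    exact one_ne_zero (α := End x) (by simpa [End.one_def] using this)
  have : Nontrivial (End y) := ⟨⟨𝟙 y, 0, hnt⟩⟩
  refine aux_isLocalRing_of_isUnit_or (fun a => ?_)
  rcases aux_isUnit_or_isUnit_one_sub (auxConj φ.symm a) with h | h
  · left
    have := aux_isUnit_conj φ h
    rwa [show auxConj φ (auxConj φ.symm a) = a from by
      show φ.inv ≫ (φ.hom ≫ a ≫ φ.inv) ≫ φ.hom = a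
      simp] at this
  · right
    have := aux_isUnit_conj φ h
    rwa [show auxConj φ ((1 : End x) - auxConj φ.symm a) = (1 : End y) - a from by
      show φ.inv ≫ ((1 : End x) - auxConj φ.symm a : End x) ≫ φ.hom = (1 : End y) - a
      rw [Preadditive.sub_comp, Preadditive.comp_sub]
      show φ.inv ≫ 𝟙 x ≫ φ.hom - φ.inv ≫ (φ.hom ≫ a ≫ φ.inv) ≫ φ.hom =
        𝟙 y - (show y ⟶ y from a)
      simp] at this

lemma aux_L0 {n : ℕ} (f : Fin (n + 1) → A) :
    biproduct.ι f 0 ≫ biproduct.lift (fun i : Fin n => biproduct.π f i.succ) = 0 := by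
  ext k
  simp [biproduct.ι_π_ne _ (Fin.succ_ne_zero k).symm]

lemma aux_Ls {n : ℕ} (f : Fin (n + 1) → A) (j : Fin n) :
    biproduct.ι f j.succ ≫ biproduct.lift (fun i : Fin n => biproduct.π f i.succ) =
      biproduct.ι (fun i : Fin n => f i.succ) j := by
  ext k
  by_cases h : j = k
  · subst h; simp
  · simp [biproduct.ι_π_ne _ h,
      biproduct.ι_π_ne _ (fun hh => h (Fin.succ_injective _ hh))]

/-- The biproduct over `Fin (n+1)` splits off its first summand. -/
noncomputable def biprodFinSuccIso {n : ℕ} (f : Fin (n + 1) → A) :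
    (⨁ f) ≅ f 0 ⊞ ⨁ (fun i : Fin n => f i.succ) where
  hom := biprod.lift (biproduct.π f 0) (biproduct.lift (fun i => biproduct.π f i.succ))
  inv := biprod.desc (biproduct.ι f 0) (biproduct.desc (fun i => biproduct.ι f i.succ))
  hom_inv_id := by
    apply biproduct.hom_ext'
    intro j
    rw [Category.comp_id, biprod.lift_desc, Preadditive.comp_add]
    induction j using Fin.cases with
    | zero =>
      rw [biproduct.ι_π_self_assoc, ← Category.assoc, aux_L0, zero_comp, add_zero]
    | succ j =>
      rw [biproduct.ι_π_ne_assoc _ (Fin.succ_ne_zero j), zero_comp, zero_add,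
        ← Category.assoc, aux_Ls, biproduct.ι_desc]
  inv_hom_id := by
    apply biprod.hom_ext' <;> apply biprod.hom_ext
    · simp
    · simp only [Category.assoc, biprod.inl_desc_assoc, Category.comp_id, biprod.lift_snd,
        biprod.inl_snd]
      exact aux_L0 f
    · simp only [Category.assoc, biprod.inr_desc_assoc, biprod.lift_fst, Category.comp_id,
        biprod.inr_fst]
      apply biproduct.hom_ext'
      intro j
      simp [biproduct.ι_π_ne _ (Fin.succ_ne_zero j)]
    · simp only [Category.assoc, biprod.inr_desc_assoc, biprod.lift_snd, Category.comp_id,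
        biprod.inr_snd]
      apply biproduct.hom_ext'
      intro j
      rw [biproduct.ι_desc_assoc, aux_Ls]
      simp

/-- If an object is isomorphic to something carrying a binary direct-sum
decomposition and has local endomorphism ring, one summand is zero. -/
lemma aux_split_of_local {C : Type*} [Category C] [Preadditive C] {x w y z : C}
    (hx : IsLocalRing (End x)) (φ : x ≅ w)
    (p₁ : w ⟶ y) (i₁ : y ⟶ w) (p₂ : w ⟶ z) (i₂ : z ⟶ w)
    (h₁ : i₁ ≫ p₁ = 𝟙 y) (h₂ : i₂ ≫ p₂ = 𝟙 z)
    (hw : p₁ ≫ i₁ + p₂ ≫ i₂ = 𝟙 w) : IsZero y ∨ IsZero z := by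
  have h₁' := reassoc_of% h₁
  have h₂' := reassoc_of% h₂
  set e : End x := φ.hom ≫ p₁ ≫ i₁ ≫ φ.inv with he
  have hee : e * e = e := by
    rw [End.mul_def, he]
    simp only [Category.assoc, Iso.inv_hom_id_assoc]
    rw [h₁']
  rcases aux_idem_eq_zero_or_one hee with h | h
  · left
    rw [IsZero.iff_id_eq_zero]
    have key : 𝟙 y = (i₁ ≫ φ.inv) ≫ e ≫ (φ.hom ≫ p₁) := by
      rw [he]
      simp only [Category.assoc, Iso.inv_hom_id_assoc]
      rw [h₁', h₁]
    rw [key, h]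
    simp
  · right
    rw [IsZero.iff_id_eq_zero]
    have he' : (φ.hom ≫ p₂ ≫ i₂ ≫ φ.inv : End x) = 0 := by
      have h2 : p₂ ≫ i₂ = 𝟙 w - p₁ ≫ i₁ := by rw [← hw]; abel
      have step : (φ.hom ≫ p₂ ≫ i₂ ≫ φ.inv : End x) = (1 : End x) - e := by
        rw [he]
        show φ.hom ≫ p₂ ≫ i₂ ≫ φ.inv = (𝟙 x : x ⟶ x) - φ.hom ≫ p₁ ≫ i₁ ≫ φ.inv
        rw [← Category.assoc p₂ i₂, h2, Preadditive.sub_comp, Preadditive.comp_sub]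
        simp
      rw [step, h]
      simp
    have key : 𝟙 z = (i₂ ≫ φ.inv) ≫ (φ.hom ≫ p₂ ≫ i₂ ≫ φ.inv : End x) ≫ (φ.hom ≫ p₂) := by
      simp only [Category.assoc, Iso.inv_hom_id_assoc]
      rw [h₂', h₂]
    rw [key, he']
    simp

/-- An object with local endomorphism ring is indecomposable. -/
lemma aux_indec_of_local {x : A} (hx : IsLocalRing (End x)) : Indec x := by
  constructor
  · intro h
    rw [IsZero.iff_id_eq_zero] at h
    exact one_ne_zero (α := End x) (by simpa [End.one_def] using h)
  · rintro y z ⟨φ⟩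
    exact aux_split_of_local hx φ biprod.fst biprod.inl biprod.snd biprod.inr
      biprod.inl_fst biprod.inr_snd biprod.total

/-- Every indecomposable object of a Krull-Schmidt category has local endomorphism
ring. -/
lemma aux_local_of_indec (hKS : KrullSchmidt A) {x : A} (hx : Indec x) :
    IsLocalRing (End x) := by
  obtain ⟨n, f, hloc, ⟨φ⟩⟩ := hKS x
  match n with
  | 0 =>
    exfalso
    apply hx.1
    have : IsZero (⨁ f) := by
      rw [IsZero.iff_id_eq_zero]
      apply biproduct.hom_ext
      intro j
      exact j.elim0
    exact this.of_iso φ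
  | Nat.succ m =>
    have φ₂ : x ≅ f 0 ⊞ ⨁ (fun i : Fin m => f i.succ) :=
      φ ≪≫ biprodFinSuccIso f
    rcases hx.2 (f 0) (⨁ (fun i : Fin m => f i.succ)) ⟨φ₂⟩ with h | h
    · exfalso
      have : Indec (f 0) := aux_indec_of_local (hloc 0)
      exact this.1 h
    · have φ₃ : x ≅ f 0 := φ₂ ≪≫ (isoBiprodZero h).symm
      exact aux_isLocalRing_end_of_iso φ₃.symm (hloc 0)

end Aux

section QuotAux

/-- The quotient functor is additive. -/
instance : (CategoryTheory.Quotient.functor S.rel).Additive :=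
  CategoryTheory.Quotient.functor_additive S.rel (by
    intro X Y f₁ f₂ g₁ g₂ h1 h2
    have := factorsThru_add S.biprod_mem h1 h2
    rwa [show (f₁ - f₂) + (g₁ - g₂) = (f₁ + g₁) - (f₂ + g₂) by abel] at this)

lemma aux_isZero_obj_of_mem {b : A} (hb : b ∈ S.carrier) :
    IsZero ((CategoryTheory.Quotient.functor S.rel).obj b) := by
  rw [IsZero.iff_id_eq_zero]
  have : (CategoryTheory.Quotient.functor S.rel).map (𝟙 b) =
      (CategoryTheory.Quotient.functor S.rel).map 0 := by
    rw [CategoryTheory.Quotient.functor_map_eq_iff]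
    show FactorsThru S.carrier (𝟙 b - 0)
    rw [sub_zero]
    exact ⟨b, 𝟙 b, 𝟙 b, hb, Category.id_comp _⟩
  simpa using this

lemma aux_mem_of_isZero_obj
    (hretract : ∀ {b c : A}, b ∈ S.carrier →
      ∀ (s : c ⟶ b) (r : b ⟶ c), s ≫ r = 𝟙 c → c ∈ S.carrier)
    {b : A} (h : IsZero ((CategoryTheory.Quotient.functor S.rel).obj b)) :
    b ∈ S.carrier := by
  rw [IsZero.iff_id_eq_zero] at h
  have : (CategoryTheory.Quotient.functor S.rel).map (𝟙 b) =
      (CategoryTheory.Quotient.functor S.rel).map 0 := by simpa using h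
  rw [CategoryTheory.Quotient.functor_map_eq_iff] at this
  obtain ⟨b', g, h', hb', hgh⟩ := this
  rw [sub_zero] at hgh
  exact hretract hb' g h' hgh

lemma aux_isZero_obj_of_isZero {x : A} (h : IsZero x) :
    IsZero ((CategoryTheory.Quotient.functor S.rel).obj x) := by
  rw [IsZero.iff_id_eq_zero] at h ⊢
  have : (CategoryTheory.Quotient.functor S.rel).map (𝟙 x) =
      (CategoryTheory.Quotient.functor S.rel).map 0 := by rw [h]
  simpa using this

/-- If the left summand becomes zero in the quotient, the image of the biproduct is
isomorphic to the image of the right summand. -/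
noncomputable def auxIsoDropLeft {y z : A}
    (h : IsZero ((CategoryTheory.Quotient.functor S.rel).obj y)) :
    (CategoryTheory.Quotient.functor S.rel).obj (y ⊞ z) ≅
      (CategoryTheory.Quotient.functor S.rel).obj z where
  hom := (CategoryTheory.Quotient.functor S.rel).map biprod.snd
  inv := (CategoryTheory.Quotient.functor S.rel).map biprod.inr
  hom_inv_id := by
    rw [← CategoryTheory.Functor.map_comp]
    have hsnd : (biprod.snd ≫ biprod.inr : y ⊞ z ⟶ y ⊞ z) =
        𝟙 (y ⊞ z) - biprod.fst ≫ biprod.inl := by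
      rw [← biprod.total]; abel
    rw [hsnd, CategoryTheory.Functor.map_sub, CategoryTheory.Functor.map_id, CategoryTheory.Functor.map_comp]
    have : (CategoryTheory.Quotient.functor S.rel).map (biprod.fst : y ⊞ z ⟶ y) = 0 :=
      h.eq_of_tgt _ _
    rw [this]
    simp
  inv_hom_id := by
    rw [← CategoryTheory.Functor.map_comp, biprod.inr_snd, CategoryTheory.Functor.map_id]

/-- If the right summand becomes zero in the quotient, the image of the biproduct is
isomorphic to the image of the left summand. -/
noncomputable def auxIsoDropRight {y z : A}
    (h : IsZero ((CategoryTheory.Quotient.functor S.rel).obj z)) :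
    (CategoryTheory.Quotient.functor S.rel).obj (y ⊞ z) ≅
      (CategoryTheory.Quotient.functor S.rel).obj y where
  hom := (CategoryTheory.Quotient.functor S.rel).map biprod.fst
  inv := (CategoryTheory.Quotient.functor S.rel).map biprod.inl
  hom_inv_id := by
    rw [← CategoryTheory.Functor.map_comp]
    have hfst : (biprod.fst ≫ biprod.inl : y ⊞ z ⟶ y ⊞ z) =
        𝟙 (y ⊞ z) - biprod.snd ≫ biprod.inr := by
      rw [← biprod.total]; abel
    rw [hfst, CategoryTheory.Functor.map_sub, CategoryTheory.Functor.map_id, CategoryTheory.Functor.map_comp]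
    have : (CategoryTheory.Quotient.functor S.rel).map (biprod.snd : y ⊞ z ⟶ z) = 0 :=
      h.eq_of_tgt _ _
    rw [this]
    simp
  inv_hom_id := by
    rw [← CategoryTheory.Functor.map_comp, biprod.inl_fst, CategoryTheory.Functor.map_id]

lemma aux_isUnit_map {C : Type*} {D : Type*} [Category C] [Category D] (F : C ⥤ D)
    {x : C} {b : End x} (hb : IsUnit b) : IsUnit (show End (F.obj x) from F.map b) := by
  obtain ⟨u, hu⟩ := hb
  refine ⟨⟨show End (F.obj x) from F.map b,
    show End (F.obj x) from F.map (↑u⁻¹ : End x), ?_, ?_⟩, rfl⟩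
  · show F.map (↑u⁻¹ : End x) ≫ F.map b = 𝟙 (F.obj x)
    rw [← F.map_comp]
    have h1 : (↑u⁻¹ : End x) ≫ b = 𝟙 x := by
      have := u.mul_inv
      rw [End.mul_def] at this
      simpa [hu] using this
    rw [h1, F.map_id]
  · show F.map b ≫ F.map (↑u⁻¹ : End x) = 𝟙 (F.obj x)
    rw [← F.map_comp]
    have h1 : b ≫ (↑u⁻¹ : End x) = 𝟙 x := by
      have := u.inv_mul
      rw [End.mul_def] at this
      simpa [hu] using this
    rw [h1, F.map_id]

lemma aux_local_endQ
    (hretract : ∀ {b c : A}, b ∈ S.carrier →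
      ∀ (s : c ⟶ b) (r : b ⟶ c), s ≫ r = 𝟙 c → c ∈ S.carrier)
    {x : A} (hx : x ∉ S.carrier) (hloc : IsLocalRing (End x)) :
    IsLocalRing (End ((CategoryTheory.Quotient.functor S.rel).obj x)) := by
  have hnt : (𝟙 ((CategoryTheory.Quotient.functor S.rel).obj x) :
      End ((CategoryTheory.Quotient.functor S.rel).obj x)) ≠ 0 := by
    intro h0
    exact hx (aux_mem_of_isZero_obj S hretract (by rw [IsZero.iff_id_eq_zero]; exact h0))
  have : Nontrivial (End ((CategoryTheory.Quotient.functor S.rel).obj x)) :=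
    ⟨⟨_, 0, hnt⟩⟩
  refine aux_isLocalRing_of_isUnit_or (fun a => ?_)
  obtain ⟨a', ha'⟩ := (CategoryTheory.Quotient.functor S.rel).map_surjective a
  rcases aux_isUnit_or_isUnit_one_sub (show End x from a') with h | h
  · left
    have := aux_isUnit_map (CategoryTheory.Quotient.functor S.rel) h
    rwa [ha'] at this
  · right
    have := aux_isUnit_map (CategoryTheory.Quotient.functor S.rel)
      (show IsUnit (show End x from 𝟙 x - a') from h)
    have h1 : (show End ((CategoryTheory.Quotient.functor S.rel).obj x) from
        (CategoryTheory.Quotient.functor S.rel).map (𝟙 x - a')) =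
        (CategoryTheory.Quotient.functor S.rel).map (𝟙 x) -
          (CategoryTheory.Quotient.functor S.rel).map a' :=
      CategoryTheory.Functor.map_sub (CategoryTheory.Quotient.functor S.rel)
    rw [h1, CategoryTheory.Functor.map_id, ha'] at this
    exact this

lemma aux_surj (hKS : KrullSchmidt A)
    (hretract : ∀ {b c : A}, b ∈ S.carrier →
      ∀ (s : c ⟶ b) (r : b ⟶ c), s ≫ r = 𝟙 c → c ∈ S.carrier) :
    ∀ (n : ℕ) (f : Fin n → A), (∀ i, IsLocalRing (End (f i))) →
      ∀ q : CategoryTheory.Quotient S.rel, IndecQ S q →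
        (q ≅ (CategoryTheory.Quotient.functor S.rel).obj (⨁ f)) →
        ∃ x : A, Indec x ∧ x ∉ S.carrier ∧
          Nonempty ((CategoryTheory.Quotient.functor S.rel).obj x ≅ q) := by
  intro n
  induction n with
  | zero =>
    intro f _ q hq φ
    exfalso
    apply hq.1
    have hz : IsZero (⨁ f) := by
      rw [IsZero.iff_id_eq_zero]
      apply biproduct.hom_ext
      intro j
      exact j.elim0
    exact (aux_isZero_obj_of_isZero S hz).of_iso φ
  | succ n ih =>
    intro f hloc q hq φ
    have φ₂ : q ≅ (CategoryTheory.Quotient.functor S.rel).obj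
        (f 0 ⊞ ⨁ (fun i : Fin n => f i.succ)) :=
      φ ≪≫ (CategoryTheory.Quotient.functor S.rel).mapIso (biprodFinSuccIso f)
    rcases hq.2 (f 0) (⨁ (fun i : Fin n => f i.succ)) ⟨φ₂⟩ with h | h
    · exact ih (fun i => f i.succ) (fun i => hloc i.succ) q hq
        (φ₂ ≪≫ auxIsoDropLeft S h)
    · have ψ : q ≅ (CategoryTheory.Quotient.functor S.rel).obj (f 0) :=
        φ₂ ≪≫ auxIsoDropRight S h
      refine ⟨f 0, aux_indec_of_local (hloc 0), ?_, ⟨ψ.symm⟩⟩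
      intro hmem
      exact hq.1 ((aux_isZero_obj_of_mem S hmem).of_iso ψ)

end QuotAux

/-- Let `A` be Krull-Schmidt and `B ⊆ A` a full additive subcategory closed under
retracts and direct sums. The quotient functor `A → A/B` induces a bijection between
isomorphism classes of indecomposable objects of `A` not in `B` and isomorphism
classes of indecomposable objects of `A/B`: it is well defined, injective and
surjective on such isomorphism classes. -/
theorem quotient_indecomposable_bijection (hKS : KrullSchmidt A)
    (hretract : ∀ {b c : A}, b ∈ S.carrier →
      ∀ (s : c ⟶ b) (r : b ⟶ c), s ≫ r = 𝟙 c → c ∈ S.carrier) :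
    (∀ x : A, Indec x → x ∉ S.carrier →
      IndecQ S ((CategoryTheory.Quotient.functor S.rel).obj x)) ∧
    (∀ x y : A, Indec x → Indec y → x ∉ S.carrier → y ∉ S.carrier →
      Nonempty ((CategoryTheory.Quotient.functor S.rel).obj x ≅
        (CategoryTheory.Quotient.functor S.rel).obj y) → Nonempty (x ≅ y)) ∧
    (∀ q : CategoryTheory.Quotient S.rel, IndecQ S q →
      ∃ x : A, Indec x ∧ x ∉ S.carrier ∧
        Nonempty ((CategoryTheory.Quotient.functor S.rel).obj x ≅ q)) := by
  refine ⟨?_, ?_, ?_⟩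
  · -- well-definedness
    intro x hx hxB
    have hloc : IsLocalRing (End x) := aux_local_of_indec hKS hx
    have hlocQ := aux_local_endQ S hretract hxB hloc
    constructor
    · intro h
      exact hxB (aux_mem_of_isZero_obj S hretract h)
    · rintro y z ⟨φ⟩
      exact aux_split_of_local hlocQ φ
        ((CategoryTheory.Quotient.functor S.rel).map biprod.fst)
        ((CategoryTheory.Quotient.functor S.rel).map biprod.inl)
        ((CategoryTheory.Quotient.functor S.rel).map biprod.snd)
        ((CategoryTheory.Quotient.functor S.rel).map biprod.inr)
        (by rw [← CategoryTheory.Functor.map_comp, biprod.inl_fst, CategoryTheory.Functor.map_id])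
        (by rw [← CategoryTheory.Functor.map_comp, biprod.inr_snd, CategoryTheory.Functor.map_id])
        (by rw [← CategoryTheory.Functor.map_comp, ← CategoryTheory.Functor.map_comp, ← CategoryTheory.Functor.map_add,
          biprod.total, CategoryTheory.Functor.map_id])
  · -- injectivity
    rintro x y hx hy hxB hyB ⟨ψ⟩
    set Q := CategoryTheory.Quotient.functor S.rel with hQ
    let f : x ⟶ y := Q.preimage ψ.hom
    let g : y ⟶ x := Q.preimage ψ.inv
    have hfg : S.rel (f ≫ g) (𝟙 x) := by
      apply (CategoryTheory.Quotient.functor_map_eq_iff S.rel _ _).mp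
      show Q.map (f ≫ g) = Q.map (𝟙 x)
      rw [CategoryTheory.Functor.map_comp]
      show Q.map f ≫ Q.map g = Q.map (𝟙 x)
      rw [CategoryTheory.Functor.map_preimage, CategoryTheory.Functor.map_preimage,
        CategoryTheory.Functor.map_id, Iso.hom_inv_id]
    obtain ⟨b, p, qq, hb, hpq⟩ := hfg
    have hlocx : IsLocalRing (End x) := aux_local_of_indec hKS hx
    have hlocy : IsLocalRing (End y) := aux_local_of_indec hKS hy
    have hunit : IsUnit (show End x from f ≫ g) := by
      rcases aux_isUnit_or_isUnit_one_sub (show End x from f ≫ g) with h | h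
      · exact h
      · exfalso
        have hsub : (1 : End x) - (show End x from f ≫ g) = -(p ≫ qq) := by
          show 𝟙 x - f ≫ g = -(p ≫ qq)
          rw [hpq]
          abel
        rw [hsub] at h
        have h' : IsUnit (show End x from p ≫ qq) := by
          have := h.neg
          rwa [neg_neg] at this
        obtain ⟨u, hu⟩ := h'
        have hv : (p ≫ qq) ≫ (↑u⁻¹ : End x) = 𝟙 x := by
          have := u.inv_mul
          rw [End.mul_def] at this
          simpa [hu] using this
        rw [Category.assoc] at hv
        exact hxB (hretract hb p (qq ≫ (↑u⁻¹ : End x)) hv)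
    obtain ⟨u, hu⟩ := hunit
    have hv1 : f ≫ g ≫ (↑u⁻¹ : End x) = 𝟙 x := by
      have := u.inv_mul
      rw [End.mul_def] at this
      rw [← Category.assoc]
      simpa [hu] using this
    have hv1' := reassoc_of% hv1
    set v : x ⟶ x := (↑u⁻¹ : End x) with hvdef
    have hee : (show End y from (g ≫ v) ≫ f) * (show End y from (g ≫ v) ≫ f) =
        (show End y from (g ≫ v) ≫ f) := by
      rw [End.mul_def]
      show ((g ≫ v) ≫ f) ≫ (g ≫ v) ≫ f = (g ≫ v) ≫ f
      simp only [Category.assoc]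
      rw [hv1']
    rcases aux_idem_eq_zero_or_one hee with h | h
    · exfalso
      apply hx.1
      rw [IsZero.iff_id_eq_zero]
      have key : 𝟙 x = f ≫ ((g ≫ v) ≫ f) ≫ (g ≫ v) := by
        simp only [Category.assoc]
        rw [hv1']
        exact hv1.symm
      rw [key, show ((g ≫ v) ≫ f : y ⟶ y) = 0 from h]
      simp
    · refine ⟨⟨f, g ≫ v, ?_, ?_⟩⟩
      · exact hv1
      · show (g ≫ v) ≫ f = 𝟙 y
        exact h
  · -- surjectivity
    intro q hq
    obtain ⟨n, f, hloc, ⟨φ⟩⟩ := hKS q.as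
    exact aux_surj S hKS hretract n f hloc q hq
      ((CategoryTheory.Quotient.functor S.rel).mapIso φ)

end Stmt6
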